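/- Let G be a finite group, m > 1, and g = x_{[k,l)} with x ≠ e. Then the number of common neighbours of e and g in the graph G_m(G) equals |G| + 2m − 4. -/
import Mathlib


namespace CayleyStmt4

variable {G : Type*}

def intvl [Group G] (m : ℕ) (x : G) (k l : ℕ) : Fin m → G :=
  fun i => if k ≤ i.1 + 1 ∧ i.1 + 1 < l then x else 1

def cS (G : Type*) [Group G] (m : ℕ) : Set (Fin m → G) :=
  {v | ∃ (x : G) (k l : ℕ), x ≠ 1 ∧ 1 ≤ k ∧ k < l ∧ l ≤ m + 1 ∧ v = intvl m x k l}

def cAdj [Group G] (m : ℕ) (g h : Fin m → G) : Prop := h * g⁻¹ ∈ cS G m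

section Aux

variable [Group G]

lemma intvl_inj {m : ℕ} {y y' : G} {a b a' b' : ℕ}
    (hy : y ≠ 1) (hy' : y' ≠ 1)
    (ha : 1 ≤ a) (hab : a < b) (hb : b ≤ m+1)
    (ha' : 1 ≤ a') (hab' : a' < b') (hb' : b' ≤ m+1)
    (h : intvl m y a b = intvl m y' a' b') : y = y' ∧ a = a' ∧ b = b' := by
  have ev : ∀ p, 1 ≤ p → p ≤ m →
      (if a ≤ p ∧ p < b then y else 1) = (if a' ≤ p ∧ p < b' then y' else 1) := by
    intro p hp1 hp2
    have e := congrFun h ⟨p-1, by omega⟩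
    simpa [intvl, Nat.sub_add_cancel hp1] using e
  have m1 : a' ≤ a ∧ a < b' := by
    have e := ev a ha (by omega)
    rw [if_pos ⟨le_rfl, hab⟩] at e
    by_cases hC : a' ≤ a ∧ a < b'
    · exact hC
    · rw [if_neg hC] at e; exact absurd e hy
  have m2 : a ≤ a' ∧ a' < b := by
    have e := ev a' ha' (by omega)
    rw [if_pos (show a' ≤ a' ∧ a' < b' from ⟨le_rfl, hab'⟩)] at e
    by_cases hC : a ≤ a' ∧ a' < b
    · exact hC
    · rw [if_neg hC] at e; exact absurd e.symm hy'
  have haa : a = a' := le_antisymm m2.1 m1.1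
  have hyy : y = y' := by
    have e := ev a ha (by omega)
    rwa [if_pos ⟨le_rfl, hab⟩, if_pos ⟨m1.1, m1.2⟩] at e
  have hbb : b = b' := by
    by_contra hne
    rcases lt_or_gt_of_ne hne with h' | h'
    · have e := ev b (by omega) (by omega)
      rw [if_neg (by omega), if_pos ⟨by omega, h'⟩] at e
      exact hy' e.symm
    · have e := ev b' (by omega) (by omega)
      rw [if_pos ⟨by omega, h'⟩, if_neg (by omega)] at e
      exact hy e
  exact ⟨hyy, haa, hbb⟩


lemma classify {x y z : G} (hx : x ≠ 1) (hy : y ≠ 1) (hz : z ≠ 1)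
    {m k l a b c d : ℕ}
    (hk : 1 ≤ k) (hkl : k < l) (hl : l ≤ m+1)
    (ha : 1 ≤ a) (hab : a < b) (hb : b ≤ m+1)
    (hc : 1 ≤ c) (hcd : c < d) (hd : d ≤ m+1)
    (E : ∀ p, 1 ≤ p → p ≤ m →
      (if a ≤ p ∧ p < b then y else 1) * (if k ≤ p ∧ p < l then x else 1)⁻¹
        = (if c ≤ p ∧ p < d then z else 1)) :
    (a = k ∧ b = l ∧ y ≠ x) ∨ (a = k ∧ b ≠ l ∧ y = x) ∨
    (a ≠ k ∧ b = l ∧ y = x) ∨ (b = k ∧ y = x⁻¹) ∨ (a = l ∧ y = x⁻¹) := by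
  have h1 : ∀ p, 1 ≤ p → p ≤ m → a ≤ p → p < b → ¬(k ≤ p ∧ p < l) →
      (c ≤ p ∧ p < d) ∧ z = y := by
    intro p hp1 hp2 hA1 hA2 hK
    have e := E p hp1 hp2
    rw [if_pos ⟨hA1, hA2⟩, if_neg hK, inv_one, mul_one] at e
    by_cases hC : c ≤ p ∧ p < d
    · rw [if_pos hC] at e; exact ⟨hC, e.symm⟩
    · rw [if_neg hC] at e; exact absurd e hy
  have h2 : ∀ p, 1 ≤ p → p ≤ m → ¬(a ≤ p ∧ p < b) → k ≤ p → p < l →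
      (c ≤ p ∧ p < d) ∧ z = x⁻¹ := by
    intro p hp1 hp2 hA hK1 hK2
    have e := E p hp1 hp2
    rw [if_neg hA, if_pos ⟨hK1, hK2⟩, one_mul] at e
    by_cases hC : c ≤ p ∧ p < d
    · rw [if_pos hC] at e; exact ⟨hC, e.symm⟩
    · rw [if_neg hC] at e; exact absurd e (inv_ne_one.mpr hx)
  have h4 : ∀ p, 1 ≤ p → p ≤ m → ¬(a ≤ p ∧ p < b) → ¬(k ≤ p ∧ p < l) →
      ¬(c ≤ p ∧ p < d) := by
    intro p hp1 hp2 hA hK hC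
    have e := E p hp1 hp2
    rw [if_neg hA, if_neg hK, if_pos hC, inv_one, mul_one] at e
    exact hz e.symm
  by_cases hyx : y = x
  · subst hyx
    have h3a : ∀ p, 1 ≤ p → p ≤ m → a ≤ p → p < b → k ≤ p → p < l →
        ¬(c ≤ p ∧ p < d) := by
      intro p hp1 hp2 hA1 hA2 hK1 hK2 hC
      have e := E p hp1 hp2
      rw [if_pos ⟨hA1, hA2⟩, if_pos ⟨hK1, hK2⟩, if_pos hC, mul_inv_cancel] at e
      exact hz e.symm
    rcases le_or_gt b k with hbk | hkb
    · obtain ⟨Ha1, Haz⟩ := h1 a ha (by omega) le_rfl hab (by omega)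
      obtain ⟨Hk1, Hkz⟩ := h2 k (by omega) (by omega) (by omega) le_rfl hkl
      have hbe : b = k := by
        by_contra hne
        have hb4 := h4 b (by omega) (by omega) (by omega) (by omega)
        omega
      exact Or.inr (Or.inr (Or.inr (Or.inl ⟨hbe, Haz.symm.trans Hkz⟩)))
    · rcases le_or_gt l a with hla | hal
      · obtain ⟨Ha1, Haz⟩ := h1 a ha (by omega) le_rfl hab (by omega)
        obtain ⟨Hk1, Hkz⟩ := h2 k (by omega) (by omega) (by omega) le_rfl hkl
        have hae : a = l := by
          by_contra hne
          have h4l := h4 l (by omega) (by omega) (by omega) (by omega)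
          omega
        exact Or.inr (Or.inr (Or.inr (Or.inr ⟨hae, Haz.symm.trans Hkz⟩)))
      · rcases lt_trichotomy a k with hak | hak | hak
        · obtain ⟨Ha1, -⟩ := h1 a ha (by omega) le_rfl hab (by omega)
          have Hik := h3a k (by omega) (by omega) (by omega) hkb le_rfl hkl
          have hbl : b = l := by
            rcases lt_trichotomy b l with h' | h' | h'
            · obtain ⟨Hl1, -⟩ := h2 (l-1) (by omega) (by omega) (by omega) (by omega) (by omega)
              omega
            · exact h'
            · obtain ⟨Hb1, -⟩ := h1 (b-1) (by omega) (by omega) (by omega) (by omega) (by omega)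
              omega
          exact Or.inr (Or.inr (Or.inl ⟨by omega, hbl, rfl⟩))
        · have hbl : b ≠ l := by
            intro h'
            by_cases hcA : a ≤ c ∧ c < b
            · exact h3a c hc (by omega) hcA.1 hcA.2 (by omega) (by omega) ⟨le_rfl, hcd⟩
            · exact h4 c hc (by omega) hcA (by omega) ⟨le_rfl, hcd⟩
          exact Or.inr (Or.inl ⟨hak, hbl, rfl⟩)
        · obtain ⟨Hk1, -⟩ := h2 k (by omega) (by omega) (by omega) le_rfl hkl
          have HiA := h3a a ha (by omega) le_rfl hab (by omega) hal
          have hbl : b = l := by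
            rcases lt_trichotomy b l with h' | h' | h'
            · obtain ⟨Hl1, -⟩ := h2 (l-1) (by omega) (by omega) (by omega) (by omega) (by omega)
              omega
            · exact h'
            · obtain ⟨Hb1, -⟩ := h1 (b-1) (by omega) (by omega) (by omega) (by omega) (by omega)
              omega
          exact Or.inr (Or.inr (Or.inl ⟨by omega, hbl, rfl⟩))
  · have h3b : ∀ p, 1 ≤ p → p ≤ m → a ≤ p → p < b → k ≤ p → p < l →
        (c ≤ p ∧ p < d) ∧ z = y * x⁻¹ := by
      intro p hp1 hp2 hA1 hA2 hK1 hK2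
      have e := E p hp1 hp2
      rw [if_pos ⟨hA1, hA2⟩, if_pos ⟨hK1, hK2⟩] at e
      by_cases hC : c ≤ p ∧ p < d
      · rw [if_pos hC] at e; exact ⟨hC, e.symm⟩
      · rw [if_neg hC] at e
        exact absurd (by rwa [mul_inv_eq_one] at e) hyx
    have hxy1 : ∀ w : G, w = y → w = y * x⁻¹ → False := by
      intro w e1 e2
      apply hx
      have h' : y * 1 = y * x⁻¹ := by rw [mul_one, ← e2, e1]
      have h'' := mul_left_cancel h'
      rwa [eq_comm, inv_eq_one] at h''
    have hxy2 : ∀ w : G, w = x⁻¹ → w = y * x⁻¹ → False := by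
      intro w e1 e2
      apply hy
      have h' : 1 * x⁻¹ = y * x⁻¹ := by rw [one_mul, ← e2, e1]
      exact (mul_right_cancel h').symm
    rcases le_or_gt b k with hbk | hkb
    · obtain ⟨Ha1, Haz⟩ := h1 a ha (by omega) le_rfl hab (by omega)
      obtain ⟨Hk1, Hkz⟩ := h2 k (by omega) (by omega) (by omega) le_rfl hkl
      have hbe : b = k := by
        by_contra hne
        have hb4 := h4 b (by omega) (by omega) (by omega) (by omega)
        omega
      exact Or.inr (Or.inr (Or.inr (Or.inl ⟨hbe, Haz.symm.trans Hkz⟩)))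
    · rcases le_or_gt l a with hla | hal
      · obtain ⟨Ha1, Haz⟩ := h1 a ha (by omega) le_rfl hab (by omega)
        obtain ⟨Hk1, Hkz⟩ := h2 k (by omega) (by omega) (by omega) le_rfl hkl
        have hae : a = l := by
          by_contra hne
          have h4l := h4 l (by omega) (by omega) (by omega) (by omega)
          omega
        exact Or.inr (Or.inr (Or.inr (Or.inr ⟨hae, Haz.symm.trans Hkz⟩)))
      · have hak : a = k := by
          rcases lt_trichotomy a k with h' | h' | h'
          · obtain ⟨-, Haz⟩ := h1 a ha (by omega) le_rfl hab (by omega)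
            exact (hxy1 z Haz (h3b k (by omega) (by omega) (by omega) hkb le_rfl hkl).2).elim
          · exact h'
          · obtain ⟨-, Hkz⟩ := h2 k (by omega) (by omega) (by omega) le_rfl hkl
            exact (hxy2 z Hkz (h3b a ha (by omega) le_rfl hab (by omega) hal).2).elim
        have hbl : b = l := by
          rcases lt_trichotomy b l with h' | h' | h'
          · obtain ⟨-, Hkz⟩ := h2 (l-1) (by omega) (by omega) (by omega) (by omega) (by omega)
            exact (hxy2 z Hkz (h3b (b-1) (by omega) (by omega) (by omega) (by omega) (by omega) (by omega)).2).elim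
          · exact h'
          · obtain ⟨-, Haz⟩ := h1 (b-1) (by omega) (by omega) (by omega) (by omega) (by omega)
            exact (hxy1 z Haz (h3b (l-1) (by omega) (by omega) (by omega) (by omega) (by omega) (by omega)).2).elim
        exact Or.inl ⟨hak, hbl, hyx⟩


lemma mem_common {m : ℕ} {x : G} (hx : x ≠ 1) {k l : ℕ}
    (hk : 1 ≤ k) (hkl : k < l) (hl : l ≤ m+1) (v : Fin m → G) :
    (cAdj m (1 : Fin m → G) v ∧ cAdj m (intvl m x k l) v) ↔
    ∃ y a b, 1 ≤ a ∧ a < b ∧ b ≤ m+1 ∧ y ≠ 1 ∧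
      ((a = k ∧ b = l ∧ y ≠ x) ∨ (a = k ∧ b ≠ l ∧ y = x) ∨
       (a ≠ k ∧ b = l ∧ y = x) ∨ (b = k ∧ y = x⁻¹) ∨ (a = l ∧ y = x⁻¹)) ∧
      v = intvl m y a b := by
  constructor
  · rintro ⟨h1v, h2v⟩
    obtain ⟨y, a, b, hy, ha, hab, hb, hv⟩ := h1v
    obtain ⟨z, c, d, hz, hc, hcd, hd, hw⟩ := h2v
    rw [inv_one, mul_one] at hv
    have E : ∀ p, 1 ≤ p → p ≤ m →
        (if a ≤ p ∧ p < b then y else 1) * (if k ≤ p ∧ p < l then x else 1)⁻¹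
          = (if c ≤ p ∧ p < d then z else 1) := by
      intro p hp1 hp2
      have e := congrFun hw ⟨p-1, by omega⟩
      simpa [hv, intvl, Pi.mul_apply, Pi.inv_apply, Nat.sub_add_cancel hp1] using e
    exact ⟨y, a, b, ha, hab, hb, hy,
      classify hx hy hz hk hkl hl ha hab hb hc hcd hd E, hv⟩
  · rintro ⟨y, a, b, ha, hab, hb, hy, hQ, rfl⟩
    constructor
    · show intvl m y a b * (1 : Fin m → G)⁻¹ ∈ cS G m
      rw [inv_one, mul_one]
      exact ⟨y, a, b, hy, ha, hab, hb, rfl⟩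
    · show intvl m y a b * (intvl m x k l)⁻¹ ∈ cS G m
      rcases hQ with ⟨h1, h2, hyx⟩ | ⟨h1, hbl, h3⟩ | ⟨hak, h2, h3⟩ | ⟨h2, h3⟩ | ⟨h1, h3⟩
      · rw [h1, h2]
        refine ⟨y * x⁻¹, k, l, fun h => hyx (by rwa [mul_inv_eq_one] at h), hk, hkl, hl, ?_⟩
        funext i
        simp only [Pi.mul_apply, Pi.inv_apply, intvl]
        split_ifs <;> first | (exfalso; omega) | group
      · rw [h1, h3]
        rcases lt_or_gt_of_ne hbl with h' | h'
        · refine ⟨x⁻¹, b, l, inv_ne_one.mpr hx, by omega, h', hl, ?_⟩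
          funext i
          simp only [Pi.mul_apply, Pi.inv_apply, intvl]
          split_ifs <;> first | (exfalso; omega) | group
        · refine ⟨x, l, b, hx, by omega, h', hb, ?_⟩
          funext i
          simp only [Pi.mul_apply, Pi.inv_apply, intvl]
          split_ifs <;> first | (exfalso; omega) | group
      · rw [h2, h3]
        rcases lt_or_gt_of_ne hak with h' | h'
        · refine ⟨x, a, k, hx, ha, h', by omega, ?_⟩
          funext i
          simp only [Pi.mul_apply, Pi.inv_apply, intvl]
          split_ifs <;> first | (exfalso; omega) | group
        · refine ⟨x⁻¹, k, a, inv_ne_one.mpr hx, hk, h', by omega, ?_⟩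
          funext i
          simp only [Pi.mul_apply, Pi.inv_apply, intvl]
          split_ifs <;> first | (exfalso; omega) | group
      · rw [h2, h3]
        refine ⟨x⁻¹, a, l, inv_ne_one.mpr hx, ha, by omega, hl, ?_⟩
        funext i
        simp only [Pi.mul_apply, Pi.inv_apply, intvl]
        split_ifs <;> first | (exfalso; omega) | group
      · rw [h1, h3]
        refine ⟨x⁻¹, k, b, inv_ne_one.mpr hx, hk, by omega, hb, ?_⟩
        funext i
        simp only [Pi.mul_apply, Pi.inv_apply, intvl]
        split_ifs <;> first | (exfalso; omega) | group



end Aux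

/-- For `g = x_{[k,l)}` with `x ≠ e`, the number of common neighbours of the
identity and `g` in `Cay(G^m, S)` equals `|G| + 2m − 4`. -/
theorem common_neighbours_weight_one [Group G] [Fintype G] (m : ℕ) (hm : 1 < m)
    (x : G) (hx : x ≠ 1) (k l : ℕ) (hk : 1 ≤ k) (hkl : k < l) (hl : l ≤ m + 1) :
    {v : Fin m → G | cAdj m (1 : Fin m → G) v ∧ cAdj m (intvl m x k l) v}.ncard =
      Fintype.card G + 2 * m - 4 := by
  classical
  have hnt : Nontrivial G := ⟨⟨x, 1, hx⟩⟩
  have hcard2 : 2 ≤ Fintype.card G := Fintype.one_lt_card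
  set T1 : Finset (G × ℕ × ℕ) := (Finset.univ \ {1, x}).image (fun y => (y, k, l)) with hT1
  set T2 : Finset (G × ℕ × ℕ) := ((Finset.Icc (k+1) (m+1)).erase l).image (fun b => (x, k, b)) with hT2
  set T3 : Finset (G × ℕ × ℕ) := ((Finset.Ico 1 l).erase k).image (fun a => (x, a, l)) with hT3
  set T4 : Finset (G × ℕ × ℕ) := (Finset.Ico 1 k).image (fun a => (x⁻¹, a, k)) with hT4
  set T5 : Finset (G × ℕ × ℕ) := (Finset.Icc (l+1) (m+1)).image (fun b => (x⁻¹, l, b)) with hT5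
  set T : Finset (G × ℕ × ℕ) := T1 ∪ T2 ∪ T3 ∪ T4 ∪ T5 with hT
  have hTmem : ∀ (y : G) (a b : ℕ), (y, a, b) ∈ T ↔
      (1 ≤ a ∧ a < b ∧ b ≤ m+1 ∧ y ≠ 1 ∧
        ((a = k ∧ b = l ∧ y ≠ x) ∨ (a = k ∧ b ≠ l ∧ y = x) ∨
         (a ≠ k ∧ b = l ∧ y = x) ∨ (b = k ∧ y = x⁻¹) ∨ (a = l ∧ y = x⁻¹))) := by
    intro y a b
    simp only [hT, hT1, hT2, hT3, hT4, hT5, Finset.mem_union, Finset.mem_image,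
      Finset.mem_sdiff, Finset.mem_univ, true_and, Finset.mem_insert, Finset.mem_singleton,
      Finset.mem_erase, Finset.mem_Icc, Finset.mem_Ico, Prod.mk.injEq, not_or]
    constructor
    · rintro ((((⟨y', ⟨hy1, hy2⟩, rfl, rfl, rfl⟩ | ⟨b', ⟨hb1, hb2, hb3⟩, rfl, rfl, rfl⟩) |
        ⟨a', ⟨ha1, ha2, ha3⟩, rfl, rfl, rfl⟩) | ⟨a', ⟨ha1, ha2⟩, rfl, rfl, rfl⟩) |
        ⟨b', ⟨hb1, hb2⟩, rfl, rfl, rfl⟩)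
      · exact ⟨hk, hkl, hl, hy1, Or.inl ⟨rfl, rfl, hy2⟩⟩
      · exact ⟨hk, by omega, hb3, hx, Or.inr (Or.inl ⟨rfl, hb1, rfl⟩)⟩
      · exact ⟨ha2, ha3, hl, hx, Or.inr (Or.inr (Or.inl ⟨ha1, rfl, rfl⟩))⟩
      · exact ⟨ha1, ha2, by omega, inv_ne_one.mpr hx, Or.inr (Or.inr (Or.inr (Or.inl ⟨rfl, rfl⟩)))⟩
      · exact ⟨by omega, by omega, hb2, inv_ne_one.mpr hx, Or.inr (Or.inr (Or.inr (Or.inr ⟨rfl, rfl⟩)))⟩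
    · rintro ⟨ha1, hab, hb1, hy1, (⟨rfl, rfl, h3⟩ | ⟨rfl, h2, rfl⟩ | ⟨h1, rfl, rfl⟩ | ⟨rfl, rfl⟩ | ⟨rfl, rfl⟩)⟩
      · exact Or.inl (Or.inl (Or.inl (Or.inl ⟨y, ⟨hy1, h3⟩, rfl, rfl, rfl⟩)))
      · exact Or.inl (Or.inl (Or.inl (Or.inr ⟨b, ⟨h2, by omega, hb1⟩, rfl, rfl, rfl⟩)))
      · exact Or.inl (Or.inl (Or.inr ⟨a, ⟨h1, ha1, by omega⟩, rfl, rfl, rfl⟩))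
      · exact Or.inl (Or.inr ⟨a, ⟨ha1, hab⟩, rfl, rfl, rfl⟩)
      · exact Or.inr ⟨b, ⟨by omega, hb1⟩, rfl, rfl, rfl⟩
  have hbounds : ∀ t : G × ℕ × ℕ, t ∈ T →
      t.1 ≠ 1 ∧ 1 ≤ t.2.1 ∧ t.2.1 < t.2.2 ∧ t.2.2 ≤ m+1 := by
    rintro ⟨y, a, b⟩ ht
    obtain ⟨h1, h2, h3, h4, -⟩ := (hTmem y a b).1 ht
    exact ⟨h4, h1, h2, h3⟩
  have hinj : Set.InjOn (fun t : G × ℕ × ℕ => intvl m t.1 t.2.1 t.2.2) ↑T := by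
    rintro ⟨y, a, b⟩ ht ⟨y', a', b'⟩ ht' h
    obtain ⟨u1, u2, u3, u4⟩ := hbounds _ ht
    obtain ⟨w1, w2, w3, w4⟩ := hbounds _ ht'
    obtain ⟨e1, e2, e3⟩ := intvl_inj u1 w1 u2 u3 u4 w2 w3 w4 h
    simp only [Prod.mk.injEq]
    exact ⟨e1, e2, e3⟩
  have hset : {v : Fin m → G | cAdj m (1 : Fin m → G) v ∧ cAdj m (intvl m x k l) v} =
      ↑(T.image fun t : G × ℕ × ℕ => intvl m t.1 t.2.1 t.2.2) := by
    ext v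
    simp only [Set.mem_setOf_eq, Finset.coe_image, Set.mem_image, Finset.mem_coe]
    rw [mem_common hx hk hkl hl v]
    constructor
    · rintro ⟨y, a, b, h1, h2, h3, h4, h5, rfl⟩
      exact ⟨(y, a, b), (hTmem y a b).2 ⟨h1, h2, h3, h4, h5⟩, rfl⟩
    · rintro ⟨⟨y, a, b⟩, ht, rfl⟩
      obtain ⟨h1, h2, h3, h4, h5⟩ := (hTmem y a b).1 ht
      exact ⟨y, a, b, h1, h2, h3, h4, h5, rfl⟩
  -- disjointness
  have dmem : ∀ (y : G) (a b : ℕ),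
      ((y,a,b) ∈ T1 → a = k ∧ b = l) ∧
      ((y,a,b) ∈ T2 → a = k ∧ k < b ∧ b ≠ l) ∧
      ((y,a,b) ∈ T3 → a ≠ k ∧ a < l ∧ b = l) ∧
      ((y,a,b) ∈ T4 → a < k ∧ b = k) ∧
      ((y,a,b) ∈ T5 → a = l ∧ l < b) := by
    intro y a b
    refine ⟨?_, ?_, ?_, ?_, ?_⟩ <;>
    · intro h
      simp only [hT1, hT2, hT3, hT4, hT5, Finset.mem_image, Finset.mem_sdiff, Finset.mem_univ,
        true_and, Finset.mem_insert, Finset.mem_singleton, Finset.mem_erase, Finset.mem_Icc,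
        Finset.mem_Ico, Prod.mk.injEq, not_or] at h
      obtain ⟨w, hw, -, e2, e3⟩ := h
      omega
  have d12 : Disjoint T1 T2 := by
    rw [Finset.disjoint_left]; rintro ⟨y,a,b⟩ p1 p2
    have q1 := (dmem y a b).1 p1; have q2 := (dmem y a b).2.1 p2; omega
  have d13 : Disjoint T1 T3 := by
    rw [Finset.disjoint_left]; rintro ⟨y,a,b⟩ p1 p2
    have q1 := (dmem y a b).1 p1; have q2 := (dmem y a b).2.2.1 p2; omega
  have d14 : Disjoint T1 T4 := by
    rw [Finset.disjoint_left]; rintro ⟨y,a,b⟩ p1 p2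
    have q1 := (dmem y a b).1 p1; have q2 := (dmem y a b).2.2.2.1 p2; omega
  have d15 : Disjoint T1 T5 := by
    rw [Finset.disjoint_left]; rintro ⟨y,a,b⟩ p1 p2
    have q1 := (dmem y a b).1 p1; have q2 := (dmem y a b).2.2.2.2 p2; omega
  have d23 : Disjoint T2 T3 := by
    rw [Finset.disjoint_left]; rintro ⟨y,a,b⟩ p1 p2
    have q1 := (dmem y a b).2.1 p1; have q2 := (dmem y a b).2.2.1 p2; omega
  have d24 : Disjoint T2 T4 := by
    rw [Finset.disjoint_left]; rintro ⟨y,a,b⟩ p1 p2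
    have q1 := (dmem y a b).2.1 p1; have q2 := (dmem y a b).2.2.2.1 p2; omega
  have d25 : Disjoint T2 T5 := by
    rw [Finset.disjoint_left]; rintro ⟨y,a,b⟩ p1 p2
    have q1 := (dmem y a b).2.1 p1; have q2 := (dmem y a b).2.2.2.2 p2; omega
  have d34 : Disjoint T3 T4 := by
    rw [Finset.disjoint_left]; rintro ⟨y,a,b⟩ p1 p2
    have q1 := (dmem y a b).2.2.1 p1; have q2 := (dmem y a b).2.2.2.1 p2; omega
  have d35 : Disjoint T3 T5 := by
    rw [Finset.disjoint_left]; rintro ⟨y,a,b⟩ p1 p2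
    have q1 := (dmem y a b).2.2.1 p1; have q2 := (dmem y a b).2.2.2.2 p2; omega
  have d45 : Disjoint T4 T5 := by
    rw [Finset.disjoint_left]; rintro ⟨y,a,b⟩ p1 p2
    have q1 := (dmem y a b).2.2.2.1 p1; have q2 := (dmem y a b).2.2.2.2 p2; omega
  -- cardinalities
  have c1 : T1.card = Fintype.card G - 2 := by
    rw [hT1, Finset.card_image_of_injective _ (fun u v h => by simpa using h),
      Finset.card_sdiff_of_subset (Finset.subset_univ _), Finset.card_univ,
      Finset.card_pair (Ne.symm hx)]
  have c2 : T2.card = m - k := by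
    rw [hT2, Finset.card_image_of_injective _ (fun u v h => by simpa using h),
      Finset.card_erase_of_mem (by simp only [Finset.mem_Icc]; omega), Nat.card_Icc]
    omega
  have c3 : T3.card = l - 2 := by
    rw [hT3, Finset.card_image_of_injective _ (fun u v h => by simpa using h),
      Finset.card_erase_of_mem (by simp only [Finset.mem_Ico]; omega), Nat.card_Ico]
    omega
  have c4 : T4.card = k - 1 := by
    rw [hT4, Finset.card_image_of_injective _ (fun u v h => by simpa using h), Nat.card_Ico]
  have c5 : T5.card = m + 1 - l := by
    rw [hT5, Finset.card_image_of_injective _ (fun u v h => by simpa using h), Nat.card_Icc]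
    omega
  have cardT : T.card = Fintype.card G + 2 * m - 4 := by
    rw [hT, Finset.card_union_of_disjoint (by
        simp only [Finset.disjoint_union_left]; exact ⟨⟨⟨d15, d25⟩, d35⟩, d45⟩),
      Finset.card_union_of_disjoint (by
        simp only [Finset.disjoint_union_left]; exact ⟨⟨d14, d24⟩, d34⟩),
      Finset.card_union_of_disjoint (by
        simp only [Finset.disjoint_union_left]; exact ⟨d13, d23⟩),
      Finset.card_union_of_disjoint d12, c1, c2, c3, c4, c5]
    omega
  rw [hset, Set.ncard_coe_finset, Finset.card_image_of_injOn hinj, cardT]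


end CayleyStmt4
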